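/- arXiv:1201.0346 — 4 statements merged into one kernel-verified Lean document; each statement's English description precedes it below -/
import Mathlib

section
/- Let J be an interval in ℝ and c : ℝ → ℝ → ℝ a cost function on [a,b] × J with a < b, such that x ↦ c(x,y) is continuous on [a,b] for each y ∈ J. Let μ be a Borel probability measure on [a,b] with barycenter b_μ = ∫ₐᵇ x dμ(x) lying in (a,b). Let f : ℝ → ℝ be continuous on [a,b] and let y ∈ J be a c-subgradient of f at b_μ. Then f(b_μ) + ∫ₐᵇ [c(x,y) − c(b_μ, y)] dμ(x) ≤ ∫ₐᵇ f(x) dμ(x). -/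
open MeasureTheory

/-! Integrating the subgradient inequality `f(b_μ) + c(x,y) − c(b_μ,y) ≤ f(x)`, valid on
`[a,b] ⊇ supp μ`, against the probability measure `μ` gives the claim; both sides are
integrable because continuous functions are bounded on the compact interval `[a,b]`. -/

theorem ContinuousOn.integrable_of_ae_mem_compact {α E : Type*} [TopologicalSpace α]
    [T2Space α] [MeasurableSpace α] [OpensMeasurableSpace α] [NormedAddCommGroup E]
    {μ : Measure α} [IsFiniteMeasure μ] {K : Set α} {g : α → E} (hK : IsCompact K) (hg : ContinuousOn g K)
    (hμK : ∀ᵐ x ∂μ, x ∈ K) : Integrable g μ := by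
  rw [← Measure.restrict_eq_self_of_ae_mem hμK]
  exact hg.integrableOn_compact hK

theorem const_add_integral_le_integral_of_ae_le {α : Type*} [MeasurableSpace α]
    {μ : Measure α} [IsProbabilityMeasure μ] {r : ℝ} {g f : α → ℝ}
    (hg : Integrable g μ) (hf : Integrable f μ) (hle : ∀ᵐ x ∂μ, r + g x ≤ f x) :
    r + ∫ x, g x ∂μ ≤ ∫ x, f x ∂μ :=
  calc r + ∫ x, g x ∂μ = ∫ x, (r + g x) ∂μ := by
        rw [integral_add (integrable_const r) hg, integral_const, probReal_univ, one_smul]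
    _ ≤ ∫ x, f x ∂μ := integral_mono_ae ((integrable_const r).add hg) hf hle

theorem weighted_integral_jensen_c_convex_general
    (a b : ℝ) (J : Set ℝ)
    (c : ℝ → ℝ → ℝ)
    (hc : ∀ y ∈ J, ContinuousOn (fun x => c x y) (Set.Icc a b))
    (f : ℝ → ℝ) (hf : ContinuousOn f (Set.Icc a b))
    (μ : Measure ℝ) [IsProbabilityMeasure μ]
    (hsupp : μ (Set.Icc a b)ᶜ = 0)
    (y : ℝ) (hyJ : y ∈ J)
    (hy : ∀ x ∈ Set.Icc a b,
      f x ≥ f (∫ x, x ∂μ) + c x y - c (∫ x, x ∂μ) y) :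
    f (∫ x, x ∂μ) + ∫ x, (c x y - c (∫ x, x ∂μ) y) ∂μ ≤ ∫ x, f x ∂μ := by
  have hμ : ∀ᵐ x ∂μ, x ∈ Set.Icc a b := mem_ae_iff.mpr hsupp
  refine const_add_integral_le_integral_of_ae_le ?_
    (hf.integrable_of_ae_mem_compact isCompact_Icc hμ) ?_
  · exact ((hc y hyJ).sub continuousOn_const).integrable_of_ae_mem_compact isCompact_Icc hμ
  · filter_upwards [hμ] with x hx
    linarith [hy x hx]

/-- Weighted integral Jensen inequality for `c`-convex functions with respect to a
Borel probability measure `μ` on `[a,b]` with barycenter `b_μ = ∫ x dμ ∈ (a,b)`: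
if `y ∈ J` is a `c`-subgradient of `f` at `b_μ`, then
`f(b_μ) + ∫ [c(x,y) − c(b_μ,y)] dμ ≤ ∫ f dμ`. -/
theorem weighted_integral_jensen_c_convex
    (a b : ℝ) (hab : a < b) (J : Set ℝ) (hJ : Convex ℝ J)
    (c : ℝ → ℝ → ℝ)
    (hc : ∀ y ∈ J, ContinuousOn (fun x => c x y) (Set.Icc a b))
    (f : ℝ → ℝ) (hf : ContinuousOn f (Set.Icc a b))
    (μ : Measure ℝ) [IsProbabilityMeasure μ]
    (hsupp : μ (Set.Icc a b)ᶜ = 0)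
    (hbar : (∫ x, x ∂μ) ∈ Set.Ioo a b)
    (y : ℝ) (hyJ : y ∈ J)
    (hy : ∀ x ∈ Set.Icc a b,
      f x ≥ f (∫ x, x ∂μ) + c x y - c (∫ x, x ∂μ) y) :
    f (∫ x, x ∂μ) + ∫ x, (c x y - c (∫ x, x ∂μ) y) ∂μ ≤ ∫ x, f x ∂μ :=
  weighted_integral_jensen_c_convex_general a b J c hc f hf μ hsupp y hyJ hy
end

section
/- Let I and J be intervals in ℝ and c : ℝ → ℝ → ℝ a cost function on I × J that is jointly concave on I × J and 2-affine (y ↦ c(x,y) is affine for each x ∈ I). Let f : ℝ → ℝ be convex on I. Then for all x₁, x₂ ∈ I and λ ∈ [0,1]: (1−λ)·∂_c f(x₁) + λ·∂_c f(x₂) ⊆ ∂_c f((1−λ)x₁ + λx₂), where the left-hand side is the Minkowski combination {(1−λ)a + λb : a ∈ ∂_c f(x₁), b ∈ ∂_c f(x₂)}. -/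
/-- The `c`-subdifferential of `f : I → ℝ` at `x₀`:
`∂_c f(x₀) = {y ∈ J : f(x) ≥ f(x₀) + c(x,y) − c(x₀,y) for all x ∈ I}`. -/
def cSubdiff (I J : Set ℝ) (c : ℝ → ℝ → ℝ) (f : ℝ → ℝ) (x₀ : ℝ) : Set ℝ :=
  {y | y ∈ J ∧ ∀ x ∈ I, f x ≥ f x₀ + c x y - c x₀ y}

/-- If `c` is jointly concave and 2-affine, and `f` is convex on `I`, then `∂_c f`
is a convex set-valued map:
`(1−λ)∂_c f(x₁) + λ∂_c f(x₂) ⊆ ∂_c f((1−λ)x₁ + λx₂)`. -/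
theorem cSubdiff_convex_set_valued
    (I J : Set ℝ) (hI : Convex ℝ I) (hJ : Convex ℝ J)
    (c : ℝ → ℝ → ℝ)
    (hconc : ConcaveOn ℝ (I ×ˢ J) (fun p : ℝ × ℝ => c p.1 p.2))
    (haff : ∀ x ∈ I, ∀ y₁ ∈ J, ∀ y₂ ∈ J, ∀ lam ∈ Set.Icc (0 : ℝ) 1,
      c x ((1 - lam) * y₁ + lam * y₂) = (1 - lam) * c x y₁ + lam * c x y₂)
    (f : ℝ → ℝ) (hf : ConvexOn ℝ I f)
    (x₁ : ℝ) (hx₁ : x₁ ∈ I) (x₂ : ℝ) (hx₂ : x₂ ∈ I)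
    (lam : ℝ) (hlam : lam ∈ Set.Icc (0 : ℝ) 1) :
    ∀ a ∈ cSubdiff I J c f x₁, ∀ b ∈ cSubdiff I J c f x₂,
      (1 - lam) * a + lam * b ∈ cSubdiff I J c f ((1 - lam) * x₁ + lam * x₂) := by
  obtain ⟨hl0, hl1⟩ := hlam
  intro a ha b hb
  obtain ⟨haJ, hsa⟩ := ha
  obtain ⟨hbJ, hsb⟩ := hb
  have h1l : (0:ℝ) ≤ 1 - lam := by linarith
  have hx0 : (1 - lam) * x₁ + lam * x₂ ∈ I := by
    have := hI hx₁ hx₂ h1l hl0 (by ring)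
    simpa [smul_eq_mul] using this
  have hyJ : (1 - lam) * a + lam * b ∈ J := by
    have := hJ haJ hbJ h1l hl0 (by ring)
    simpa [smul_eq_mul] using this
  refine ⟨hyJ, ?_⟩
  intro x hx
  have hconc' := hconc.2 (Set.mk_mem_prod hx₁ haJ) (Set.mk_mem_prod hx₂ hbJ) h1l hl0 (by ring)
  simp only [Prod.smul_mk, Prod.mk_add_mk, smul_eq_mul] at hconc'
  have hfc := hf.2 hx₁ hx₂ h1l hl0 (by ring)
  simp only [smul_eq_mul] at hfc
  have haffx := haff x hx a haJ b hbJ lam ⟨hl0, hl1⟩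
  have haffx0 := haff ((1 - lam) * x₁ + lam * x₂) hx0 a haJ b hbJ lam ⟨hl0, hl1⟩
  have h1 : f x₁ + c x a - c x₁ a ≤ f x := hsa x hx
  have h2 : f x₂ + c x b - c x₂ b ≤ f x := hsb x hx
  have h1' := mul_le_mul_of_nonneg_left h1 h1l
  have h2' := mul_le_mul_of_nonneg_left h2 hl0
  simp only [ge_iff_le]
  nlinarith [h1', h2', hconc', hfc, haffx, haffx0]
end

section
/- Let I and J be intervals in ℝ and c : ℝ → ℝ → ℝ a cost function on I × J that is 1-concave, i.e. x ↦ c(x,y) is concave on I for each fixed y ∈ J. Let f : ℝ → ℝ be convex on I. Then for all x₁, x₂ ∈ I and λ ∈ [0,1]: ∂_c f(x₁) ∩ ∂_c f(x₂) ⊆ ∂_c f((1−λ)x₁ + λx₂). -/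
/-- If `c` is 1-concave (concave in its first variable) and `f` is convex on `I`,
then `∂_c f(x₁) ∩ ∂_c f(x₂) ⊆ ∂_c f((1−λ)x₁ + λx₂)` for all `λ ∈ [0,1]`. -/
theorem cSubdiff_inter_subset_of_one_concave
    (I J : Set ℝ) (hI : Convex ℝ I) (hJ : Convex ℝ J)
    (c : ℝ → ℝ → ℝ)
    (hconc : ∀ y ∈ J, ConcaveOn ℝ I (fun x => c x y))
    (f : ℝ → ℝ) (hf : ConvexOn ℝ I f)
    (x₁ : ℝ) (hx₁ : x₁ ∈ I) (x₂ : ℝ) (hx₂ : x₂ ∈ I)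
    (lam : ℝ) (hlam : lam ∈ Set.Icc (0 : ℝ) 1) :
    cSubdiff I J c f x₁ ∩ cSubdiff I J c f x₂ ⊆
      cSubdiff I J c f ((1 - lam) * x₁ + lam * x₂) := by
  rintro y ⟨⟨hyJ, h1⟩, _, h2⟩
  obtain ⟨hl0, hl1⟩ := hlam
  have hμ : (0:ℝ) ≤ 1 - lam := by linarith
  have hsum : (1 - lam) + lam = 1 := by ring
  have hxlam : (1 - lam) * x₁ + lam * x₂ ∈ I := hI hx₁ hx₂ hμ hl0 hsum
  have hfc : f ((1 - lam) * x₁ + lam * x₂) ≤ (1 - lam) * f x₁ + lam * f x₂ :=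
    hf.2 hx₁ hx₂ hμ hl0 hsum
  have hcc : (1 - lam) * c x₁ y + lam * c x₂ y ≤ c ((1 - lam) * x₁ + lam * x₂) y :=
    (hconc y hyJ).2 hx₁ hx₂ hμ hl0 hsum
  refine ⟨hyJ, fun x hx => ?_⟩
  have e1 := h1 x hx
  have e2 := h2 x hx
  nlinarith [mul_le_mul_of_nonneg_left (le_of_eq (rfl : f x = f x)) hμ]
end

section
/- Let I and J be intervals in ℝ and c : ℝ → ℝ → ℝ a cost function on I × J that is 1-concave (x ↦ c(x,y) is concave on I for each y ∈ J). Let f : ℝ → ℝ be convex on I. If there exist x₁ < x₂ in I such that ∂_c f(x₁) ∩ ∂_c f(x₂) ≠ ∅, then [x₁, x₂] ⊆ dom(∂_c f), i.e. ∂_c f(x) ≠ ∅ for every x ∈ [x₁, x₂]. -/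
/-- If `c` is 1-concave, `f` is convex on `I`, and `∂_c f(x₁) ∩ ∂_c f(x₂) ≠ ∅` for
some `x₁ < x₂` in `I`, then `∂_c f(x) ≠ ∅` for every `x ∈ [x₁, x₂]`. -/
theorem cSubdiff_nonempty_on_segment
    (I J : Set ℝ) (hI : Convex ℝ I) (hJ : Convex ℝ J)
    (c : ℝ → ℝ → ℝ)
    (hconc : ∀ y ∈ J, ConcaveOn ℝ I (fun x => c x y))
    (f : ℝ → ℝ) (hf : ConvexOn ℝ I f)
    (x₁ : ℝ) (hx₁ : x₁ ∈ I) (x₂ : ℝ) (hx₂ : x₂ ∈ I) (hlt : x₁ < x₂)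
    (hne : (cSubdiff I J c f x₁ ∩ cSubdiff I J c f x₂).Nonempty) :
    ∀ x ∈ Set.Icc x₁ x₂, (cSubdiff I J c f x).Nonempty := by
  obtain ⟨y, ⟨hyJ, h1⟩, ⟨_, h2⟩⟩ := hne
  intro x hx
  -- the function h = f - c(·,y) is convex on I and minimized at x₁ and x₂
  have hh : ConvexOn ℝ I (fun x => f x - c x y) :=
    hf.sub (hconc y hyJ)
  set h : ℝ → ℝ := fun x => f x - c x y with hhdef
  have h1' : ∀ z ∈ I, h x₁ ≤ h z := fun z hz => by
    have := h1 z hz; simp only [hhdef]; linarith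
  have h2' : ∀ z ∈ I, h x₂ ≤ h z := fun z hz => by
    have := h2 z hz; simp only [hhdef]; linarith
  have heq : h x₁ = h x₂ := le_antisymm (h1' x₂ hx₂) (h2' x₁ hx₁)
  have hxI : x ∈ I := hI.ordConnected.out hx₁ hx₂ hx
  -- x = a x₁ + b x₂
  obtain ⟨a, b, ha, hb, hab, hxab⟩ := (Convex.mem_Icc hlt.le).mp hx
  have hle : h x ≤ h x₁ := by
    have := hh.2 hx₁ hx₂ ha hb hab
    simp only [smul_eq_mul] at this
    rw [hxab, heq] at this
    have hsum : a * h x₂ + b * h x₂ = h x₂ := by rw [← add_mul, hab, one_mul]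
    rw [heq]
    linarith
  refine ⟨y, hyJ, fun z hz => ?_⟩
  have : h x ≤ h z := hle.trans (h1' z hz)
  simp only [hhdef] at this
  linarith
end
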